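/- Let φⁿ, φⁿ⁺¹, λⁿ⁺½ be smooth functions on a bounded domain Ω ⊆ ℝᵈ with ∂ₙλⁿ⁺½ = 0 on ∂Ω, and let uⁿ⁺½ satisfy δ_ε (Pⁿ : ∇uⁿ⁺½) + ξε² ∇·((φⁿ)²∇λⁿ⁺½) = 0 in Ω, where δ_ε ≥ 0 and Pⁿ are given smooth fields. Then ∫_Ω λⁿ⁺½ δ_ε Pⁿ : ∇uⁿ⁺½ dx = ∫_Ω ξε² (φⁿ)² |∇λⁿ⁺½|² dx ≥ 0. -/

import Mathlib

open MeasureTheory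
open scoped RealInnerProductSpace

/-- Divergence of a vector field on Euclidean space. -/
noncomputable def vdiv {d : ℕ} (f : EuclideanSpace ℝ (Fin d) → EuclideanSpace ℝ (Fin d))
    (x : EuclideanSpace ℝ (Fin d)) : ℝ :=
  ∑ i : Fin d, fderiv ℝ f x (EuclideanSpace.single i 1) i

/-- Frobenius contraction `P : ∇u` of a matrix field with the velocity gradient. -/
noncomputable def gradContract {d : ℕ}
    (P : EuclideanSpace ℝ (Fin d) → Matrix (Fin d) (Fin d) ℝ)
    (u : EuclideanSpace ℝ (Fin d) → EuclideanSpace ℝ (Fin d))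
    (x : EuclideanSpace ℝ (Fin d)) : ℝ :=
  ∑ i : Fin d, ∑ j : Fin d, P x i j * fderiv ℝ u x (EuclideanSpace.single j 1) i


section Aux

variable {d : ℕ}

local notation "E" => EuclideanSpace ℝ (Fin d)

lemma grad_smooth {f : E → ℝ} (hf : ContDiff ℝ (⊤ : ℕ∞) f) :
    ContDiff ℝ (⊤ : ℕ∞) (fun x => gradient f x) := by
  have h1 : ContDiff ℝ (⊤ : ℕ∞) (fderiv ℝ f) := hf.fderiv_right (by simp)
  have h2 : ContDiff ℝ (⊤ : ℕ∞) (fun L : E →L[ℝ] ℝ => (InnerProductSpace.toDual ℝ E).symm L) :=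
    (InnerProductSpace.toDual ℝ E).symm.contDiff
  exact h2.comp h1

lemma grad_apply {f : E → ℝ} (x : E) (i : Fin d) :
    gradient f x i = fderiv ℝ f x (EuclideanSpace.single i 1) := by
  have h : ⟪gradient f x, EuclideanSpace.single i 1⟫ = fderiv ℝ f x (EuclideanSpace.single i 1) :=
    InnerProductSpace.toDual_symm_apply
  rw [← h, EuclideanSpace.inner_single_right]
  simp

lemma vdiv_smul (c : E → ℝ) (g : E → E) (hc : ContDiff ℝ (⊤ : ℕ∞) c) (hg : ContDiff ℝ (⊤ : ℕ∞) g) (x : E) :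
    vdiv (fun y => c y • g y) x
      = c x * vdiv g x + ∑ i : Fin d, fderiv ℝ c x (EuclideanSpace.single i 1) * g x i := by
  have key : fderiv ℝ (fun y => c y • g y) x
      = c x • fderiv ℝ g x + (fderiv ℝ c x).smulRight (g x) :=
    fderiv_fun_smul (hc.differentiable (by simp) x) (hg.differentiable (by simp) x)
  unfold vdiv
  simp only [key, ContinuousLinearMap.add_apply, ContinuousLinearMap.coe_smul', Pi.smul_apply,
    ContinuousLinearMap.smulRight_apply, PiLp.add_apply, PiLp.smul_apply, smul_eq_mul]
  rw [Finset.sum_add_distrib, Finset.mul_sum]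

lemma vdiv_continuous {F : E → E} (hF : ContDiff ℝ (⊤ : ℕ∞) F) : Continuous (vdiv F) := by
  unfold vdiv
  apply continuous_finset_sum
  intro i _
  have h1 : ContDiff ℝ (⊤ : ℕ∞) (fderiv ℝ F) := hF.fderiv_right (by simp)
  have h1 : Continuous (fderiv ℝ F) := h1.continuous
  have h2 : Continuous (fun x => fderiv ℝ F x (EuclideanSpace.single i 1)) :=
    h1.clm_apply continuous_const
  exact (EuclideanSpace.proj i).continuous.comp h2

lemma cont_integrableOn {Ω : Set E} (hΩb : Bornology.IsBounded Ω) {f : E → ℝ}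
    (hf : Continuous f) : MeasureTheory.IntegrableOn f Ω := by
  have hK : IsCompact (closure Ω) := hΩb.isCompact_closure
  exact (hf.continuousOn.integrableOn_compact hK).mono_set subset_closure

end Aux

theorem stmt14 {d : ℕ} (ξ ε : ℝ) (hξ : 0 < ξ) (hε : 0 < ε)
    (Ω : Set (EuclideanSpace ℝ (Fin d))) (hΩo : IsOpen Ω) (hΩb : Bornology.IsBounded Ω)
    -- surface measure on the (smooth) boundary and outward unit normal
    (σ : Measure (EuclideanSpace ℝ (Fin d)))
    (ν : EuclideanSpace ℝ (Fin d) → EuclideanSpace ℝ (Fin d))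
    (hν : ∀ x ∈ frontier Ω, ‖ν x‖ = 1)
    -- the divergence theorem holds on Ω
    (divThm : ∀ f : EuclideanSpace ℝ (Fin d) → EuclideanSpace ℝ (Fin d), ContDiff ℝ (⊤ : ℕ∞) f →
      ∫ x in Ω, vdiv f x = ∫ x in frontier Ω, ⟪f x, ν x⟫ ∂σ)
    -- data: φⁿ, φⁿ⁺¹, λⁿ⁺½ smooth scalar fields, uⁿ⁺½ a smooth vector field,
    -- δ_ε ≥ 0 and the projection field Pⁿ smooth given fields
    (φn φn1 lam : EuclideanSpace ℝ (Fin d) → ℝ)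
    (u : EuclideanSpace ℝ (Fin d) → EuclideanSpace ℝ (Fin d))
    (δ : EuclideanSpace ℝ (Fin d) → ℝ)
    (P : EuclideanSpace ℝ (Fin d) → Matrix (Fin d) (Fin d) ℝ)
    (hφn : ContDiff ℝ (⊤ : ℕ∞) φn) (hφn1 : ContDiff ℝ (⊤ : ℕ∞) φn1) (hlam : ContDiff ℝ (⊤ : ℕ∞) lam)
    (hu : ContDiff ℝ (⊤ : ℕ∞) u) (hδs : ContDiff ℝ (⊤ : ℕ∞) δ)
    (hP : ∀ i j, ContDiff ℝ (⊤ : ℕ∞) (fun x => P x i j))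
    (hδ : ∀ x, 0 ≤ δ x)
    -- Neumann boundary condition ∂ₙ λⁿ⁺½ = 0 on ∂Ω
    (hneu : ∀ x ∈ frontier Ω, ⟪gradient lam x, ν x⟫ = 0)
    -- relaxed local-inextensibility equation in Ω
    (heq : ∀ x ∈ Ω,
      δ x * gradContract P u x + ξ * ε ^ 2 * vdiv (fun y => (φn y) ^ 2 • gradient lam y) x = 0) :
    (∫ x in Ω, lam x * (δ x * gradContract P u x)) =
      (∫ x in Ω, ξ * ε ^ 2 * (φn x) ^ 2 * ‖gradient lam x‖ ^ 2) ∧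
    0 ≤ ∫ x in Ω, ξ * ε ^ 2 * (φn x) ^ 2 * ‖gradient lam x‖ ^ 2 := by

  classical
  set g : EuclideanSpace ℝ (Fin d) → EuclideanSpace ℝ (Fin d) :=
    fun y => (φn y) ^ 2 • gradient lam y with hgdef
  have hglam : ContDiff ℝ (⊤ : ℕ∞) (fun x => gradient lam x) := grad_smooth hlam
  have hg : ContDiff ℝ (⊤ : ℕ∞) g := (hφn.pow 2).smul hglam
  set F : EuclideanSpace ℝ (Fin d) → EuclideanSpace ℝ (Fin d) :=
    fun y => lam y • g y with hFdef
  have hF : ContDiff ℝ (⊤ : ℕ∞) F := hlam.smul hg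
  have step1 : ∀ x, vdiv F x = lam x * vdiv g x + (φn x) ^ 2 * ‖gradient lam x‖ ^ 2 := by
    intro x
    have h := vdiv_smul lam g hlam hg x
    have hsum : (∑ i : Fin d, fderiv ℝ lam x (EuclideanSpace.single i 1) * g x i)
        = (φn x) ^ 2 * ‖gradient lam x‖ ^ 2 := by
      have hnorm : ‖gradient lam x‖ ^ 2 = ∑ i : Fin d, gradient lam x i * gradient lam x i := by
        rw [EuclideanSpace.norm_eq, Real.sq_sqrt (Finset.sum_nonneg (fun i _ => by positivity))]
        refine Finset.sum_congr rfl fun i _ => ?_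
        rw [Real.norm_eq_abs, sq_abs, sq]
      rw [hnorm, Finset.mul_sum]
      refine Finset.sum_congr rfl fun i _ => ?_
      rw [← grad_apply]
      show gradient lam x i * ((φn x) ^ 2 • gradient lam x) i = _
      simp [PiLp.smul_apply]
      ring
    rw [h, hsum]
  set A : EuclideanSpace ℝ (Fin d) → ℝ :=
    fun x => ξ * ε ^ 2 * (φn x) ^ 2 * ‖gradient lam x‖ ^ 2 with hAdef
  have hcongr : ∀ x ∈ Ω, lam x * (δ x * gradContract P u x)
      = A x - ξ * ε ^ 2 * vdiv F x := by
    intro x hx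
    have h1 : δ x * gradContract P u x = -(ξ * ε ^ 2 * vdiv g x) := by
      have := heq x hx; linarith
    rw [h1, step1 x, hAdef]
    ring
  have hAcont : Continuous A := by
    apply Continuous.mul
    · exact continuous_const.mul (hφn.continuous.pow 2)
    · exact (hglam.continuous.norm.pow 2)
  have hAint : MeasureTheory.IntegrableOn A Ω := cont_integrableOn hΩb hAcont
  have hBint : MeasureTheory.IntegrableOn (fun x => ξ * ε ^ 2 * vdiv F x) Ω :=
    cont_integrableOn hΩb (continuous_const.mul (vdiv_continuous hF))
  have hdiv0 : (∫ x in Ω, vdiv F x) = 0 := by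
    rw [divThm F hF]
    have h0 : ∀ x ∈ frontier Ω, ⟪F x, ν x⟫ = 0 := by
      intro x hx
      show ⟪lam x • ((φn x) ^ 2 • gradient lam x), ν x⟫ = 0
      rw [real_inner_smul_left, real_inner_smul_left, hneu x hx]
      ring
    rw [MeasureTheory.setIntegral_congr_fun isClosed_frontier.measurableSet
      (fun x hx => h0 x hx : Set.EqOn (fun x => ⟪F x, ν x⟫) (fun _ => (0:ℝ)) (frontier Ω))]
    simp
  have hmain : (∫ x in Ω, lam x * (δ x * gradContract P u x)) = ∫ x in Ω, A x := by
    rw [MeasureTheory.setIntegral_congr_fun hΩo.measurableSet hcongr,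
      MeasureTheory.integral_sub hAint hBint]
    have : (∫ x in Ω, ξ * ε ^ 2 * vdiv F x) = ξ * ε ^ 2 * ∫ x in Ω, vdiv F x := by
      rw [MeasureTheory.integral_const_mul]
    rw [this, hdiv0]
    ring
  refine ⟨hmain, ?_⟩
  apply MeasureTheory.setIntegral_nonneg hΩo.measurableSet
  intro x _
  positivity
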